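/- arXiv:math/0204136 — 3 statements merged into one kernel-verified Lean document; each statement's English description precedes it below -/
import Mathlib

section
/- A function f : (X,𝒯) → (Y,𝒱) between topological spaces is θ-continuous if and only if cl_θ(f⁻¹(B)) ⊆ f⁻¹(cl_θ(B)) for every B ⊆ Y. -/
open Set

/-- The θ-closure of a set `A` in a topological space: the set of points `x` such that
`closure U` meets `A` for every open neighbourhood `U` of `x`. -/
def thetaCl {X : Type*} [TopologicalSpace X] (A : Set X) : Set X :=
  {x | ∀ U : Set X, IsOpen U → x ∈ U → (closure U ∩ A).Nonempty}

/-- A function between topological spaces is θ-continuous if for every point `x` and every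
open neighbourhood `V` of `f x` there is an open neighbourhood `U` of `x` with
`f '' closure U ⊆ closure V`. -/
def ThetaContinuous {X Y : Type*} [TopologicalSpace X] [TopologicalSpace Y] (f : X → Y) : Prop :=
  ∀ x : X, ∀ V : Set Y, IsOpen V → f x ∈ V →
    ∃ U : Set X, IsOpen U ∧ x ∈ U ∧ f '' closure U ⊆ closure V

section ThetaClosure

variable {X Y : Type*} [TopologicalSpace X] [TopologicalSpace Y]

theorem notMem_thetaCl_iff {A : Set X} {x : X} :
    x ∉ thetaCl A ↔ ∃ U : Set X, IsOpen U ∧ x ∈ U ∧ closure U ⊆ Aᶜ := by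
  simp only [thetaCl, mem_ofPred_eq, not_forall, not_nonempty_iff_eq_empty,
    ← disjoint_iff_inter_eq_empty, ← subset_compl_iff_disjoint_right, exists_prop]

theorem notMem_thetaCl_compl_closure {V : Set X} {x : X} (hV : IsOpen V) (hx : x ∈ V) :
    x ∉ thetaCl (closure V)ᶜ :=
  notMem_thetaCl_iff.2 ⟨V, hV, hx, (compl_compl _).superset⟩

theorem thetaContinuous_iff_notMem_thetaCl_preimage_compl_closure {f : X → Y} :
    ThetaContinuous f ↔
      ∀ x : X, ∀ V : Set Y, IsOpen V → f x ∈ V → x ∉ thetaCl (f ⁻¹' (closure V)ᶜ) := by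
  simp only [ThetaContinuous, notMem_thetaCl_iff, preimage_compl, compl_compl, image_subset_iff]

theorem ThetaContinuous.thetaCl_preimage_subset {f : X → Y} (hf : ThetaContinuous f)
    (B : Set Y) : thetaCl (f ⁻¹' B) ⊆ f ⁻¹' thetaCl B := by
  intro x hx V hV hxV
  obtain ⟨U, hU, hxU, hUV⟩ := hf x V hV hxV
  obtain ⟨z, hzU, hzB⟩ := hx U hU hxU
  exact ⟨f z, hUV (mem_image_of_mem f hzU), hzB⟩

end ThetaClosure

/-- A function between topological spaces is θ-continuous iff
`thetaCl (f ⁻¹' B) ⊆ f ⁻¹' (thetaCl B)` for every `B ⊆ Y`. -/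
theorem thetaContinuous_iff_thetaCl_preimage_subset {X Y : Type*} [TopologicalSpace X]
    [TopologicalSpace Y] (f : X → Y) :
    ThetaContinuous f ↔ ∀ B : Set Y, thetaCl (f ⁻¹' B) ⊆ f ⁻¹' (thetaCl B) := by
  refine ⟨ThetaContinuous.thetaCl_preimage_subset, fun h => ?_⟩
  rw [thetaContinuous_iff_notMem_thetaCl_preimage_compl_closure]
  intro x V hV hxV hx
  exact notMem_thetaCl_compl_closure hV hxV (h _ hx)
end

section
/- Let (X,u) be a closure space, Y a topological space (regarded as a closure space via its Kuratowski closure), and (f_λ)_{λ∈Λ} a net in Y^X. The net (f_λ) converges continuously to f ∈ Y^X if and only if limsup_Λ f_λ⁻¹(B) ⊆ f⁻¹(B) for every closed subset B of Y. -/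
open Set

universe u

/-- A Čech closure operator on a type `X`: it satisfies (C1) `cl ∅ = ∅`,
(C2) `A ⊆ cl A` and (C3) `cl (A ∪ B) = cl A ∪ cl B`.  The pair `(X, u)` is a
(Čech) closure space. -/
structure CechClosure (X : Type u) : Type u where
  cl : Set X → Set X
  cl_empty : cl ∅ = ∅
  subset_cl : ∀ A : Set X, A ⊆ cl A
  cl_union : ∀ A B : Set X, cl (A ∪ B) = cl A ∪ cl B

namespace CechClosure

variable {X Y Z : Type u}

/-- The interior operator of a closure space: `int_u A = X \ u (X \ A)`. -/
def interior (u : CechClosure X) (A : Set X) : Set X := (u.cl Aᶜ)ᶜ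

/-- `U` is a neighbourhood of `x` in `(X, u)` if `x ∈ int_u U`. -/
def Nhd (u : CechClosure X) (x : X) (U : Set X) : Prop := x ∈ u.interior U

theorem interior_subset (u : CechClosure X) (A : Set X) : u.interior A ⊆ A := by
  intro x hx
  by_contra h
  exact hx (u.subset_cl _ h)

theorem interior_inter (u : CechClosure X) (A B : Set X) :
    u.interior (A ∩ B) = u.interior A ∩ u.interior B := by
  unfold interior
  rw [compl_inter, u.cl_union, compl_union]

theorem nhd_univ (u : CechClosure X) (x : X) : u.Nhd x univ := by
  simp [Nhd, interior, u.cl_empty]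

theorem nhd_inter (u : CechClosure X) {x : X} {A B : Set X} (hA : u.Nhd x A)
    (hB : u.Nhd x B) : u.Nhd x (A ∩ B) := by
  have h := u.interior_inter A B
  unfold Nhd at *
  rw [h]
  exact ⟨hA, hB⟩

/-- A function `f : (X, u) → (Y, v)` between closure spaces is continuous if
`f (u A) ⊆ v (f A)` for every `A ⊆ X`. -/
def Continuous (u : CechClosure X) (v : CechClosure Y) (f : X → Y) : Prop :=
  ∀ A : Set X, f '' u.cl A ⊆ v.cl (f '' A)

/-- The product of two closure spaces: `(z, x)` is in the closure of `S` iff every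
"rectangle" `W ×ˢ U` of neighbourhoods `W` of `z` and `U` of `x` meets `S`. -/
def prod (w : CechClosure Z) (u : CechClosure X) : CechClosure (Z × X) where
  cl S := {p | ∀ W U, w.Nhd p.1 W → u.Nhd p.2 U → (W ×ˢ U ∩ S).Nonempty}
  cl_empty := by
    ext p
    simp only [mem_setOf_eq, mem_empty_iff_false, iff_false]
    intro h
    rcases h univ univ (w.nhd_univ _) (u.nhd_univ _) with ⟨q, -, hq⟩
    exact hq
  subset_cl := by
    intro S p hp W U hW hU
    exact ⟨p, ⟨⟨w.interior_subset _ hW, u.interior_subset _ hU⟩, hp⟩⟩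
  cl_union := by
    intro S T
    ext p
    simp only [mem_setOf_eq, mem_union]
    constructor
    · intro h
      by_contra hc
      push_neg at hc
      obtain ⟨h1, h2⟩ := hc
      simp only [← Set.not_nonempty_iff_eq_empty] at h1 h2
      obtain ⟨W1, U1, hW1, hU1, hne1⟩ := h1
      obtain ⟨W2, U2, hW2, hU2, hne2⟩ := h2
      rcases h (W1 ∩ W2) (U1 ∩ U2) (w.nhd_inter hW1 hW2) (u.nhd_inter hU1 hU2) with
        ⟨q, ⟨⟨hq1, hq2⟩, hqST⟩⟩
      rcases hqST with hqS | hqT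
      · exact hne1 ⟨q, ⟨⟨hq1.1, hq2.1⟩, hqS⟩⟩
      · exact hne2 ⟨q, ⟨⟨hq1.2, hq2.2⟩, hqT⟩⟩
    · rintro (h | h) W U hW hU
      · rcases h W U hW hU with ⟨q, hq1, hq2⟩
        exact ⟨q, hq1, Or.inl hq2⟩
      · rcases h W U hW hU with ⟨q, hq1, hq2⟩
        exact ⟨q, hq1, Or.inr hq2⟩

/-- `Y^X`: the type of continuous functions between the closure spaces
`(X, u)` and `(Y, v)`. -/
def ContMap (u : CechClosure X) (v : CechClosure Y) : Type u :=
  {f : X → Y // Continuous u v f}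

/-- A closure operator `σ` on `Y^X` is proper (splitting) if for every closure space
`(Z, w)`, continuity of `g : (Z, w) × (X, u) → (Y, v)` implies continuity of
`g* : (Z, w) → (Y^X, σ)`, where `g (z, x) = (g* z) x`. -/
def Proper (u : CechClosure X) (v : CechClosure Y) (σ : CechClosure (ContMap u v)) : Prop :=
  ∀ (Z : Type u) (w : CechClosure Z) (G : Z → ContMap u v),
    Continuous (w.prod u) v (fun p => (G p.1).1 p.2) → Continuous w σ G

/-- A closure operator `σ` on `Y^X` is admissible (jointly continuous) if for every closure
space `(Z, w)`, continuity of `g* : (Z, w) → (Y^X, σ)` implies continuity of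
`g : (Z, w) × (X, u) → (Y, v)`, where `g (z, x) = (g* z) x`. -/
def Admissible (u : CechClosure X) (v : CechClosure Y) (σ : CechClosure (ContMap u v)) : Prop :=
  ∀ (Z : Type u) (w : CechClosure Z) (G : Z → ContMap u v),
    Continuous w σ G → Continuous (w.prod u) v (fun p => (G p.1).1 p.2)

/-- A topological space regarded as a closure space via its (Kuratowski) closure operator. -/
def ofTop {Z : Type u} (t : TopologicalSpace Z) : CechClosure Z :=
  letI := t
  { cl := fun A => _root_.closure A
    cl_empty := closure_empty
    subset_cl := fun _ => subset_closure
    cl_union := fun _ _ => closure_union }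

/-- `le` is the order relation of a directed set: a reflexive and transitive relation on a
nonempty type in which every two elements have an upper bound. -/
structure IsDirectedOrder {Λ : Type*} (le : Λ → Λ → Prop) : Prop where
  refl : ∀ a, le a a
  trans : ∀ a b c, le a b → le b c → le a c
  directed : ∀ a b, ∃ c, le a c ∧ le b c
  nonempty : Nonempty Λ

/-- Convergence of a net `s : Λ → X` (with order `le` on `Λ`) to a point `x` in a closure
space `(X, u)`: every neighbourhood of `x` contains `s l` residually. -/
def NetConv (u : CechClosure X) {Λ : Type*} (le : Λ → Λ → Prop) (s : Λ → X) (x : X) : Prop :=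
  ∀ U : Set X, u.Nhd x U → ∃ l₀, ∀ l, le l₀ l → s l ∈ U

/-- The product order on `Λ × M`. -/
def prodLE {Λ M : Type*} (leΛ : Λ → Λ → Prop) (leM : M → M → Prop) :
    Λ × M → Λ × M → Prop :=
  fun p q => leΛ p.1 q.1 ∧ leM p.2 q.2

/-- A net `F : Λ → Y^X` converges continuously to `f ∈ Y^X` if for every `x ∈ X` and every
net `s : M → X` converging to `x` in `(X, u)`, the net `(l, m) ↦ (F l) (s m)` (indexed by
`Λ × M` with the product order) converges to `f x` in `(Y, v)`. -/
def ContConv (u : CechClosure X) (v : CechClosure Y) {Λ : Type u} (leΛ : Λ → Λ → Prop)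
    (F : Λ → ContMap u v) (f : ContMap u v) : Prop :=
  ∀ (M : Type u) (leM : M → M → Prop), IsDirectedOrder leM →
    ∀ (s : M → X) (x : X), NetConv u leM s x →
      NetConv v (prodLE leΛ leM) (fun p : Λ × M => (F p.1).1 (s p.2)) (f.1 x)

/-- The upper limit of a net `A : Λ → Set X` of subsets of a closure space `(X, u)`: the set
of points `x` such that for every `l₀` and every neighbourhood `U` of `x` there is `l ≥ l₀`
with `A l ∩ U ≠ ∅`. -/
def UpperLim (u : CechClosure X) {Λ : Type*} (le : Λ → Λ → Prop) (A : Λ → Set X) : Set X :=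
  {x | ∀ (l₀ : Λ) (U : Set X), u.Nhd x U → ∃ l, le l₀ l ∧ (A l ∩ U).Nonempty}

/-- `g : M → α` is a subnet of `f : Λ → α`: there is `φ : M → Λ` with `g = f ∘ φ` such that
`φ` is residually above any given index of `Λ`. -/
def IsSubnet {α : Type*} {Λ M : Type*} (leΛ : Λ → Λ → Prop) (leM : M → M → Prop)
    (f : Λ → α) (g : M → α) : Prop :=
  ∃ φ : M → Λ, (∀ m, g m = f (φ m)) ∧ ∀ l₀, ∃ m₀, ∀ m, leM m₀ m → leΛ l₀ (φ m)

end CechClosure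
namespace CechClosure

variable {X Y : Type u}

/-! If `x` lies in the upper limit of `f_λ⁻¹(B)`, picking a point of `f_λ⁻¹(B) ∩ U` with
`λ ≥ λ₀` for each pair `(λ₀, U)` gives a net converging to `x` along which the product net
`f_λ(x_μ)` is frequently in `B`; continuous convergence then forces `f x ∈ B` when `B` is
closed. Conversely, if the product net is frequently outside a neighbourhood `V` of `f x`,
then `x` lies in the upper limit of `f_λ⁻¹(closure Vᶜ)`, so `f x ∈ closure Vᶜ`, which is
impossible. -/

theorem nhd_ofTop_iff [t : TopologicalSpace Y] {y : Y} {U : Set Y} :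
    (ofTop t).Nhd y U ↔ U ∈ nhds y := by
  change y ∈ (closure Uᶜ)ᶜ ↔ _
  rw [← interior_compl, compl_compl, mem_interior_iff_mem_nhds]

theorem IsDirectedOrder.prod {Λ M : Type*} {leΛ : Λ → Λ → Prop} {leM : M → M → Prop}
    (hΛ : IsDirectedOrder leΛ) (hM : IsDirectedOrder leM) :
    IsDirectedOrder (prodLE leΛ leM) where
  refl p := ⟨hΛ.refl p.1, hM.refl p.2⟩
  trans p q r hpq hqr := ⟨hΛ.trans _ _ _ hpq.1 hqr.1, hM.trans _ _ _ hpq.2 hqr.2⟩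
  directed p q := by
    obtain ⟨a, hpa, hqa⟩ := hΛ.directed p.1 q.1
    obtain ⟨b, hpb, hqb⟩ := hM.directed p.2 q.2
    exact ⟨(a, b), ⟨hpa, hpb⟩, ⟨hqa, hqb⟩⟩
  nonempty := by
    obtain ⟨a⟩ := hΛ.nonempty
    obtain ⟨b⟩ := hM.nonempty
    exact ⟨(a, b)⟩

theorem isDirectedOrder_nhd (u : CechClosure X) (x : X) :
    IsDirectedOrder (fun U V : {U : Set X // u.Nhd x U} => V.1 ⊆ U.1) where
  refl _ := subset_rfl
  trans _ _ _ hUV hVW := hVW.trans hUV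
  directed U V := ⟨⟨U.1 ∩ V.1, u.nhd_inter U.2 V.2⟩, inter_subset_left, inter_subset_right⟩
  nonempty := ⟨⟨univ, u.nhd_univ x⟩⟩

theorem mem_upperLim_of_netConv {Λ M : Type*} {u : CechClosure X} {leΛ : Λ → Λ → Prop}
    {leM : M → M → Prop} {A : Λ → Set X} {s : M → X} {x : X} (hs : NetConv u leM s x)
    (hfreq : ∀ p, ∃ q, prodLE leΛ leM p q ∧ s q.2 ∈ A q.1) :
    x ∈ UpperLim u leΛ A := by
  intro l₀ U hU
  obtain ⟨m₀, hm₀⟩ := hs U hU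
  obtain ⟨⟨l, m⟩, ⟨hl, hm⟩, hA⟩ := hfreq (l₀, m₀)
  exact ⟨l, hl, s m, hA, hm₀ m hm⟩

theorem exists_netConv_of_mem_upperLim {Λ : Type u} {u : CechClosure X}
    {leΛ : Λ → Λ → Prop} (hΛ : IsDirectedOrder leΛ) {A : Λ → Set X} {x : X}
    (hx : x ∈ UpperLim u leΛ A) :
    ∃ (M : Type u) (leM : M → M → Prop), IsDirectedOrder leM ∧ ∃ s : M → X,
      NetConv u leM s x ∧ ∀ p, ∃ q, prodLE leΛ leM p q ∧ s q.2 ∈ A q.1 := by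
  choose φ hφ s hs using fun m : Λ × {U : Set X // u.Nhd x U} => hx m.1 m.2.1 m.2.2
  refine ⟨_, _, hΛ.prod (isDirectedOrder_nhd u x), s, ?_, ?_⟩
  · intro U hU
    obtain ⟨l⟩ := hΛ.nonempty
    exact ⟨(l, ⟨U, hU⟩), fun m hm => hm.2 (hs m).2⟩
  · rintro ⟨l₀, l₁, U⟩
    obtain ⟨c, hl₀c, hl₁c⟩ := hΛ.directed l₀ l₁
    exact ⟨(φ (c, U), c, U), ⟨hΛ.trans _ _ _ hl₀c (hφ (c, U)), hl₁c, subset_rfl⟩, (hs (c, U)).1⟩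

/-- Let `(X, u)` be a closure space and `Y` a topological space (regarded as a closure
space via its Kuratowski closure).  A net `(f_λ)` in `Y^X` converges continuously to
`f ∈ Y^X` iff `limsup_Λ f_λ⁻¹(B) ⊆ f⁻¹(B)` for every closed subset `B` of `Y`. -/
theorem contConv_iff_upperLim_closed (u : CechClosure X) [tY : TopologicalSpace Y]
    {Λ : Type u} (leΛ : Λ → Λ → Prop) (hΛ : IsDirectedOrder leΛ)
    (F : Λ → ContMap u (ofTop tY)) (f : ContMap u (ofTop tY)) :
    ContConv u (ofTop tY) leΛ F f ↔
      ∀ B : Set Y, IsClosed B →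
        UpperLim u leΛ (fun l => (F l).1 ⁻¹' B) ⊆ f.1 ⁻¹' B := by
  constructor
  · intro hconv B hB x hx
    by_contra hfx
    obtain ⟨M, leM, hM, s, hs, hfreq⟩ := exists_netConv_of_mem_upperLim hΛ hx
    obtain ⟨p, hp⟩ := hconv M leM hM s x hs Bᶜ
      (nhd_ofTop_iff.mpr (hB.isOpen_compl.mem_nhds hfx))
    obtain ⟨q, hpq, hqB⟩ := hfreq p
    exact hp q hpq hqB
  · intro h M leM _ s x hs V hV
    by_contra hnot
    push Not at hnot
    have hx : x ∈ UpperLim u leΛ (fun l => (F l).1 ⁻¹' closure Vᶜ) :=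
      mem_upperLim_of_netConv hs fun p =>
        (hnot p).imp fun _ hq => ⟨hq.1, subset_closure hq.2⟩
    obtain ⟨y, hyV, hyVc⟩ :=
      mem_closure_iff_nhds.mp (h _ isClosed_closure hx) V (nhd_ofTop_iff.mp hV)
    exact hyVc hyV

end CechClosure
end

section
/- Let (X,u) and (Y,v) be closure spaces and σ a Čech closure operator on Y^X. Then σ is proper if and only if for every topological space Z which is either a T₁-space having at most one non-isolated point or the Sierpiński space (regarded as a closure space via its Kuratowski closure), continuity of g : Z × (X,u) → (Y,v) implies continuity of g* : Z → (Y^X,σ); and σ is admissible if and only if for every such space Z, continuity of g* : Z → (Y^X,σ) implies continuity of g : Z × (X,u) → (Y,v). -/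
open Set

universe u

namespace CechClosure

variable {X Y : Type u}

/-- A topological space has at most one non-isolated point. -/
def AtMostOneNonIsolated (Z : Type*) [TopologicalSpace Z] : Prop :=
  ∀ z₁ z₂ : Z, ¬IsOpen ({z₁} : Set Z) → ¬IsOpen ({z₂} : Set Z) → z₁ = z₂

/-- A topological space is (homeomorphic to) the Sierpiński space: it has exactly two
points `a ≠ b` and its open sets are `∅`, `{b}` and the whole space. -/
def IsSierpinski (Z : Type*) [TopologicalSpace Z] : Prop :=
  ∃ a b : Z, a ≠ b ∧ (∀ z : Z, z = a ∨ z = b) ∧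
    ∀ S : Set Z, IsOpen S ↔ S = ∅ ∨ S = {b} ∨ S = Set.univ

/-! Continuity between closure spaces is pointwise: `f` is continuous iff it maps the
neighbourhood filter of every point into that of its image. Both properties can therefore be
tested one point `z` of `(Z, w)` at a time, on the space `Option (Z × ℕ)` in which every
`some _` is isolated and the filter `w.nhds z ×ˢ atTop` converges to `none`. This space is `T₁`
with `none` as its only non-isolated point, the map `none ↦ z`, `some (z', n) ↦ z'` into
`(Z, w)` is continuous, and it pushes the filter converging to `none` onto the neighbourhood
filter of `z`. Hence a map out of `Z` (or out of `Z × X`) is continuous at `z` (at `(z, x)`) as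
soon as its composite with the test map is continuous at `none` (at `(none, x)`). -/

open Filter Topology

theorem _root_.Filter.prod_atTop_le_cofinite {α : Type*} (f : Filter α) :
    f ×ˢ (atTop : Filter ℕ) ≤ cofinite := by
  rw [le_cofinite_iff_eventually_ne]
  rintro ⟨a, n⟩
  filter_upwards [prod_mem_prod univ_mem (eventually_gt_atTop n)] with p hp hpn
  exact (ne_of_gt hp.2) (congrArg Prod.snd hpn)

section ClosureSpace

variable {Z W : Type u}

theorem cl_mono (w : CechClosure Z) {A B : Set Z} (h : A ⊆ B) : w.cl A ⊆ w.cl B := by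
  rw [← union_eq_self_of_subset_left h, w.cl_union]
  exact subset_union_left

def nhds (w : CechClosure Z) (z : Z) : Filter Z where
  sets := {V | w.Nhd z V}
  univ_sets := w.nhd_univ z
  sets_of_superset hA hAB hB := hA (w.cl_mono (compl_subset_compl.2 hAB) hB)
  inter_sets := w.nhd_inter

theorem mem_nhds_iff {w : CechClosure Z} {z : Z} {V : Set Z} : V ∈ w.nhds z ↔ z ∉ w.cl Vᶜ :=
  Iff.rfl

theorem pure_le_nhds (w : CechClosure Z) (z : Z) : pure z ≤ w.nhds z :=
  fun V hV => w.interior_subset V hV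

theorem mem_cl_iff {w : CechClosure Z} {z : Z} {A : Set Z} :
    z ∈ w.cl A ↔ ∀ V ∈ w.nhds z, (V ∩ A).Nonempty := by
  constructor
  · intro hz V hV
    by_contra hVA
    have hAc : Aᶜ ∈ w.nhds z := mem_of_superset hV fun y hy hyA => hVA ⟨y, hy, hyA⟩
    exact hAc (by rwa [compl_compl])
  · intro h
    by_contra hz
    obtain ⟨y, hyA, hy⟩ := h Aᶜ (by rwa [mem_nhds_iff, compl_compl])
    exact hyA hy

theorem continuous_iff_tendsto {w : CechClosure Z} {v : CechClosure W} {f : Z → W} :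
    Continuous w v f ↔ ∀ z, Tendsto f (w.nhds z) (v.nhds (f z)) := by
  refine ⟨fun hf z V hV hz => hV ?_, fun hf A => ?_⟩
  · refine v.cl_mono ?_ (hf _ ⟨z, hz, rfl⟩)
    rintro _ ⟨y, hy, rfl⟩
    exact hy
  · rintro _ ⟨z, hz, rfl⟩
    rw [mem_cl_iff] at hz ⊢
    intro V hV
    obtain ⟨y, hyV, hyA⟩ := hz _ (hf z hV)
    exact ⟨f y, hyV, y, hyA, rfl⟩

theorem nhds_prod (w : CechClosure Z) (u : CechClosure X) (p : Z × X) :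
    (w.prod u).nhds p = w.nhds p.1 ×ˢ u.nhds p.2 := by
  ext S
  rw [mem_prod_iff, mem_nhds_iff]
  simp only [prod, mem_ofPred_eq, not_forall, not_nonempty_iff_eq_empty, ← sdiff_eq,
    sdiff_eq_empty]
  constructor
  · rintro ⟨V, U, hV, hU, hVU⟩
    exact ⟨V, hV, U, hU, hVU⟩
  · rintro ⟨V, hV, U, hU, hVU⟩
    exact ⟨V, U, hV, hU, hVU⟩

theorem nhds_ofTop [t : TopologicalSpace Z] (z : Z) : (ofTop t).nhds z = 𝓝 z := by
  ext N
  rw [mem_nhds_iff, ← mem_interior_iff_mem_nhds, interior_eq_compl_closure_compl]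
  rfl

theorem continuous_id (w : CechClosure Z) : Continuous w w id := fun A => by
  rw [image_id, image_id]

theorem Continuous.comp {V : Type u} {w : CechClosure Z} {v : CechClosure W}
    {v' : CechClosure V} {g : W → V} {f : Z → W} (hg : Continuous v v' g)
    (hf : Continuous w v f) : Continuous w v' (g ∘ f) := fun A => by
  rw [image_comp, image_comp]
  exact (image_mono (hf A)).trans (hg _)

theorem Continuous.prodMap {Z' X' : Type u} {w : CechClosure Z} {w' : CechClosure Z'}
    {u : CechClosure X} {u' : CechClosure X'} {f : Z → Z'} {g : X → X'}
    (hf : Continuous w w' f) (hg : Continuous u u' g) :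
    Continuous (w.prod u) (w'.prod u') (Prod.map f g) := by
  rw [continuous_iff_tendsto] at *
  intro p
  rw [nhds_prod, nhds_prod]
  exact (hf p.1).prodMap (hg p.2)

end ClosureSpace

section LimitTopology

variable {ι : Type*} (F : Filter ι)

abbrev limitTopology : TopologicalSpace (Option ι) := nhdsAdjoint none (F.map some)

theorem nhds_none_limitTopology :
    @_root_.nhds _ (limitTopology F) none = pure none ⊔ F.map some :=
  nhds_nhdsAdjoint_same _ _

theorem nhds_some_limitTopology (i : ι) :
    @_root_.nhds _ (limitTopology F) (some i) = pure (some i) :=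
  nhds_nhdsAdjoint_of_ne _ (Option.some_ne_none i)

theorem tendsto_some_limitTopology : Tendsto some F (@_root_.nhds _ (limitTopology F) none) := by
  rw [nhds_none_limitTopology]
  exact le_sup_right

theorem t1Space_limitTopology (hF : F ≤ cofinite) : @T1Space _ (limitTopology F) := by
  let := limitTopology F
  rw [t1Space_iff_disjoint_pure_nhds]
  rintro x (_ | j) hxj
  · obtain ⟨i, rfl⟩ := Option.ne_none_iff_exists'.1 hxj
    rw [nhds_none_limitTopology, disjoint_sup_right, disjoint_pure_pure, ← principal_singleton,
      disjoint_principal_left]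
    exact ⟨hxj, (le_cofinite_iff_eventually_ne.1 hF i).mono fun j hj hji =>
      hj (Option.some_injective _ hji)⟩
  · rw [nhds_some_limitTopology, disjoint_pure_pure]
    exact hxj

theorem atMostOneNonIsolated_limitTopology : @AtMostOneNonIsolated _ (limitTopology F) := by
  let := limitTopology F
  have h : ∀ o : Option ι, ¬IsOpen {o} → o = none := by
    rintro (_ | i) hi
    · rfl
    · exact absurd ((isOpen_singleton_iff_nhds_eq_pure _).2 (nhds_some_limitTopology F i)) hi
  exact fun a b ha hb => (h a ha).trans (h b hb).symm

end LimitTopology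

section TestSpace

variable {Z : Type u} (w : CechClosure Z) (z : Z)

/-- The `ℕ` factor makes this space `T₁` even when `(Z, w)` is not. -/
abbrev testSpace : TopologicalSpace (Option (Z × ℕ)) := limitTopology (w.nhds z ×ˢ atTop)

def testMap : Option (Z × ℕ) → Z := fun o => o.elim z Prod.fst

theorem t1Space_testSpace : @T1Space _ (testSpace w z) :=
  t1Space_limitTopology _ (prod_atTop_le_cofinite _)

theorem atMostOneNonIsolated_testSpace : @AtMostOneNonIsolated _ (testSpace w z) :=
  atMostOneNonIsolated_limitTopology _

theorem continuous_testMap : Continuous (ofTop (testSpace w z)) w (testMap z) := by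
  let := testSpace w z
  rw [continuous_iff_tendsto]
  rintro (_ | p) <;> rw [nhds_ofTop]
  · rw [nhds_none_limitTopology, tendsto_sup]
    exact ⟨(tendsto_pure_pure _ _).mono_right (w.pure_le_nhds z), tendsto_map'_iff.2 tendsto_fst⟩
  · rw [nhds_some_limitTopology]
    exact (tendsto_pure_pure _ _).mono_right (w.pure_le_nhds _)

theorem tendsto_of_tendsto_comp_testMap {β : Type*} {h : Z → β} {L : Filter β}
    (hh : Tendsto (h ∘ testMap z) (@_root_.nhds _ (testSpace w z) none) L) :
    Tendsto h (w.nhds z) L := by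
  have := hh.comp (tendsto_some_limitTopology _)
  rwa [← map_fst_prod (w.nhds z) (atTop : Filter ℕ), tendsto_map'_iff]

theorem tendsto_prod_of_tendsto_comp_testMap {γ β : Type*} {h : Z × γ → β}
    {l : Filter γ} {L : Filter β}
    (hh : Tendsto (h ∘ Prod.map (testMap z) id) (@_root_.nhds _ (testSpace w z) none ×ˢ l) L) :
    Tendsto h (w.nhds z ×ˢ l) L := by
  have := hh.comp ((tendsto_some_limitTopology _).prodMap tendsto_id)
  rwa [← map_fst_prod (w.nhds z) (atTop : Filter ℕ), ← map_id (f := l), prod_map_map_eq,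
    tendsto_map'_iff]

end TestSpace

section ProperAdmissible

variable (u : CechClosure X) (v : CechClosure Y) (σ : CechClosure (ContMap u v))

theorem proper_of_forall_t1Space
    (hT : ∀ (Z : Type u) [tZ : TopologicalSpace Z], T1Space Z → AtMostOneNonIsolated Z →
      ∀ G : Z → ContMap u v,
        Continuous ((ofTop tZ).prod u) v (fun p => (G p.1).1 p.2) → Continuous (ofTop tZ) σ G) :
    Proper u v σ := by
  intro Z w G hg
  rw [continuous_iff_tendsto]
  intro z
  let := testSpace w z
  have hGφ : Continuous (ofTop (testSpace w z)) σ (G ∘ testMap z) :=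
    hT _ (t1Space_testSpace w z) (atMostOneNonIsolated_testSpace w z) _
      (hg.comp ((continuous_testMap w z).prodMap (continuous_id u)))
  have hGφ_none := continuous_iff_tendsto.1 hGφ none
  rw [nhds_ofTop] at hGφ_none
  exact tendsto_of_tendsto_comp_testMap w z hGφ_none

theorem admissible_of_forall_t1Space
    (hT : ∀ (Z : Type u) [tZ : TopologicalSpace Z], T1Space Z → AtMostOneNonIsolated Z →
      ∀ G : Z → ContMap u v,
        Continuous (ofTop tZ) σ G → Continuous ((ofTop tZ).prod u) v (fun p => (G p.1).1 p.2)) :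
    Admissible u v σ := by
  intro Z w G hG
  rw [continuous_iff_tendsto]
  rintro ⟨z, x⟩
  let := testSpace w z
  have hgφ := hT _ (t1Space_testSpace w z) (atMostOneNonIsolated_testSpace w z) _
    (hG.comp (continuous_testMap w z))
  have hgφ_none := continuous_iff_tendsto.1 hgφ (none, x)
  rw [nhds_prod, nhds_ofTop] at hgφ_none
  rw [nhds_prod]
  exact tendsto_prod_of_tendsto_comp_testMap w z hgφ_none

end ProperAdmissible

/-- A closure operator `σ` on `Y^X` is proper iff for every topological space `Z` which is
either a `T₁`-space with at most one non-isolated point or the Sierpiński space (regarded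
as a closure space via its Kuratowski closure), continuity of `g : Z × (X, u) → (Y, v)`
implies continuity of `g* : Z → (Y^X, σ)`; and it is admissible iff for every such `Z`
the reverse implication holds. -/
theorem proper_admissible_iff_test_spaces (u : CechClosure X) (v : CechClosure Y)
    (σ : CechClosure (ContMap u v)) :
    (Proper u v σ ↔
      ∀ (Z : Type u) [tZ : TopologicalSpace Z],
        ((T1Space Z ∧ AtMostOneNonIsolated Z) ∨ IsSierpinski Z) →
        ∀ G : Z → ContMap u v,
          Continuous ((ofTop tZ).prod u) v (fun p => (G p.1).1 p.2) →
          Continuous (ofTop tZ) σ G) ∧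
    (Admissible u v σ ↔
      ∀ (Z : Type u) [tZ : TopologicalSpace Z],
        ((T1Space Z ∧ AtMostOneNonIsolated Z) ∨ IsSierpinski Z) →
        ∀ G : Z → ContMap u v,
          Continuous (ofTop tZ) σ G →
          Continuous ((ofTop tZ).prod u) v (fun p => (G p.1).1 p.2)) :=
  ⟨⟨fun hP Z tZ _ => hP Z (ofTop tZ),
      fun hT => proper_of_forall_t1Space u v σ fun Z _ h₁ h₂ => hT Z (.inl ⟨h₁, h₂⟩)⟩,
    ⟨fun hA Z tZ _ => hA Z (ofTop tZ),
      fun hT => admissible_of_forall_t1Space u v σ fun Z _ h₁ h₂ => hT Z (.inl ⟨h₁, h₂⟩)⟩⟩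

end CechClosure
end
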